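/- (Lemma 3.1) For all x ∈ ℝ: v'(x) ≥ v(x) and |u'(x)| ≥ u(x); moreover v(x) ≥ e^{x−t}·v(t) whenever x ≥ t, u(x) ≥ e^{t−x}·u(t) whenever x ≤ t, and ρ(x) = u(x)v(x) ≤ 1 for all x ∈ ℝ. -/

import Mathlib

open MeasureTheory Filter Real Set
open scoped ENNReal

noncomputable section

/-- Condition (1.5): for every `a > 0`, `∫_{x-a}^{x+a} q(t) dt → ∞` as `|x| → ∞`. -/
def Cond15 (q : ℝ → ℝ) : Prop :=
  ∀ a : ℝ, 0 < a → Tendsto (fun x => ∫ t in (x - a)..(x + a), q t) (cocompact ℝ) atTop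

/-- `(u, v)` is a principal fundamental system of solutions (PFSS) of `z'' = q z`.
Local absolute continuity of `u'` together with `u'' = q u` a.e. is encoded via the
fundamental theorem of calculus: `u' b - u' a = ∫_a^b q t * u t dt` for all `a, b`. -/
def IsPFSS (q u v : ℝ → ℝ) : Prop :=
  ContDiff ℝ 1 u ∧ ContDiff ℝ 1 v ∧
  (∀ a b : ℝ, deriv u b - deriv u a = ∫ t in a..b, q t * u t) ∧
  (∀ a b : ℝ, deriv v b - deriv v a = ∫ t in a..b, q t * v t) ∧
  (∀ x, 0 < u x) ∧ (∀ x, 0 < v x) ∧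
  (∀ x, deriv u x < 0) ∧ (∀ x, 0 < deriv v x) ∧
  (∀ x, deriv v x * u x - deriv u x * v x = 1) ∧
  (∀ x, u x = v x * ∫ t in Set.Ioi x, ((v t) ^ 2)⁻¹) ∧
  Tendsto u atTop (nhds 0) ∧ Tendsto (deriv u) atTop (nhds 0) ∧
  Tendsto v atTop atTop ∧ Tendsto (deriv v) atTop atTop ∧
  Tendsto v atBot (nhds 0) ∧ Tendsto (deriv v) atBot (nhds 0) ∧
  Tendsto u atBot atTop ∧ Tendsto (fun x => |deriv u x|) atBot atTop

/-- The Green function: `G(x,t) = u(x) v(t)` for `x ≥ t`, `G(x,t) = u(t) v(x)` for `x ≤ t`. -/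
def GreenFn (u v : ℝ → ℝ) (x t : ℝ) : ℝ := if x ≤ t then u t * v x else u x * v t

/-- The Green operator `(Gf)(x) = ∫_ℝ G(x,t) f(t) dt`. -/
def GreenOp (u v f : ℝ → ℝ) (x : ℝ) : ℝ := ∫ t, GreenFn u v x t * f t

/-!
If `w'' = q w` with `w ≥ 0` and `q ≥ c²`, then `e^{-cx} (w' + c w)` is nondecreasing, its
derivative being `e^{-cx} (q - c²) w ≥ 0` almost everywhere. For `c = -1` and `w = v` this quantity
tends to `0` at `-∞`, so `v' ≥ v`; for `c = 1` and `w = u` it tends to `0` at `+∞`, so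
`u' ≤ -u`. Integrating these differential inequalities gives the exponential bounds, and the
Wronskian gives `1 = v' u - u' v ≥ 2 u v`.
-/

theorem integral_deriv_mul_eq_sub_of_sub_eq_integral {Φ F h : ℝ → ℝ} {a b : ℝ}
    (hΦ : ContDiff ℝ 1 Φ) (hh : IntervalIntegrable h volume a b)
    (hF : ∀ x, F x - F a = ∫ t in a..x, h t) :
    ∫ t in a..b, deriv Φ t * F t + Φ t * h t = Φ b * F b - Φ a * F a := by
  have hF_eq : F = fun x => F a + ∫ t in a..x, h t := funext fun x => by linarith [hF x]
  have hF_ac : AbsolutelyContinuousOnInterval F a b := by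
    rw [hF_eq]
    exact contDiffOn_const.absolutelyContinuousOnInterval.add
      (hh.absolutelyContinuousOnInterval_intervalIntegral left_mem_uIcc)
  rw [← hΦ.contDiffOn.absolutelyContinuousOnInterval.integral_deriv_mul_eq_sub hF_ac]
  refine intervalIntegral.integral_congr_ae ?_
  filter_upwards [hh.ae_hasDerivAt_integral] with x hx hx_mem
  have hF' : HasDerivAt F (h x) x :=
    hF_eq ▸ (hx (uIoc_subset_uIcc hx_mem) a left_mem_uIcc).const_add (F a)
  rw [hF'.deriv]

theorem monotone_exp_mul_deriv_add {q w : ℝ → ℝ} (hq_loc : LocallyIntegrable q)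
    (hw : ContDiff ℝ 1 w) (hw'' : ∀ a b, deriv w b - deriv w a = ∫ t in a..b, q t * w t)
    (hw_nonneg : ∀ x, 0 ≤ w x) {c : ℝ} (hq : ∀ x, c ^ 2 ≤ q x) :
    Monotone fun x => exp (-(c * x)) * (deriv w x + c * w x) := by
  have hw' : Continuous (deriv w) := hw.continuous_deriv le_rfl
  have hqw (a b : ℝ) : IntervalIntegrable (fun t => q t * w t) volume a b :=
    (intervalIntegrable_iff.mpr <| (hq_loc.integrableOn_isCompact isCompact_uIcc).mono_set
      uIoc_subset_uIcc).mul_continuousOn hw.continuous.continuousOn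
  have hexp : ContDiff ℝ 1 fun x => exp (-(c * x)) := by fun_prop
  have hexp_deriv (x : ℝ) : deriv (fun x => exp (-(c * x))) x = -c * exp (-(c * x)) := by
    have : HasDerivAt (fun x => exp (-(c * x))) (exp (-(c * x)) * -(c * 1)) x :=
      ((hasDerivAt_id' x).const_mul c).neg.exp
    rw [this.deriv]
    ring
  intro a b hab
  have hF (x : ℝ) : (deriv w x + c * w x) - (deriv w a + c * w a) =
      ∫ t in a..x, q t * w t + c * deriv w t := by
    rw [intervalIntegral.integral_add (hqw a x) ((hw'.intervalIntegrable a x).const_mul c),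
      intervalIntegral.integral_const_mul, ← hw'' a x,
      intervalIntegral.integral_deriv_eq_sub (fun y _ => hw.differentiable one_ne_zero y)
        (hw'.intervalIntegrable a x)]
    ring
  have hibp := integral_deriv_mul_eq_sub_of_sub_eq_integral hexp
    ((hqw a b).add ((hw'.intervalIntegrable a b).const_mul c)) hF
  dsimp only
  rw [← sub_nonneg, ← hibp]
  refine intervalIntegral.integral_nonneg hab fun t _ => ?_
  have hpos : 0 ≤ exp (-(c * t)) * ((q t - c ^ 2) * w t) :=
    mul_nonneg (exp_pos _).le (mul_nonneg (sub_nonneg.2 (hq t)) (hw_nonneg t))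
  rw [hexp_deriv]
  linear_combination hpos

theorem exp_mul_sub_mul_le_of_le_deriv {w : ℝ → ℝ} {c : ℝ} (hw : Differentiable ℝ w)
    (h : ∀ x, c * w x ≤ deriv w x) {t x : ℝ} (htx : t ≤ x) :
    exp (c * (x - t)) * w t ≤ w x := by
  have hderiv (y : ℝ) : HasDerivAt (fun y => exp (-(c * y)) * w y)
      (exp (-(c * y)) * -(c * 1) * w y + exp (-(c * y)) * deriv w y) y :=
    ((hasDerivAt_id' y).const_mul c).neg.exp.mul (hw y).hasDerivAt
  have hmono : Monotone fun y => exp (-(c * y)) * w y := by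
    refine monotone_of_deriv_nonneg (fun y => (hderiv y).differentiableAt) fun y => ?_
    rw [(hderiv y).deriv]
    nlinarith [exp_pos (-(c * y)), h y]
  calc exp (c * (x - t)) * w t = exp (c * x) * (exp (-(c * t)) * w t) := by
        rw [← mul_assoc, ← exp_add]; ring_nf
    _ ≤ exp (c * x) * (exp (-(c * x)) * w x) :=
        mul_le_mul_of_nonneg_left (hmono htx) (exp_pos _).le
    _ = w x := by rw [← mul_assoc, ← exp_add]; simp

theorem lemma_3_1 (q u v : ℝ → ℝ) (hq_loc : LocallyIntegrable q) (hq : ∀ x, 1 ≤ q x)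
    (huv : IsPFSS q u v) :
    (∀ x : ℝ, v x ≤ deriv v x) ∧
    (∀ x : ℝ, u x ≤ |deriv u x|) ∧
    (∀ x t : ℝ, t ≤ x → Real.exp (x - t) * v t ≤ v x) ∧
    (∀ x t : ℝ, x ≤ t → Real.exp (t - x) * u t ≤ u x) ∧
    (∀ x : ℝ, u x * v x ≤ 1) := by
  obtain ⟨hu, hv, hu'', hv'', hu_pos, hv_pos, hu'_neg, -, hwronskian, -, hu_top, hu'_top, -, -,
    hv_bot, hv'_bot, -, -⟩ := huv
  have hv_le (x : ℝ) : v x ≤ deriv v x := by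
    have hmono := monotone_exp_mul_deriv_add hq_loc hv hv'' (fun x => (hv_pos x).le)
      (c := -1) (by simpa using hq)
    have hlim : Tendsto (fun x => exp (-(-1 * x)) * (deriv v x + -1 * v x)) atBot (nhds 0) := by
      simpa [sub_eq_add_neg] using tendsto_exp_atBot.mul (hv'_bot.sub hv_bot)
    linarith [nonneg_of_mul_nonneg_right (hmono.le_of_tendsto hlim x) (exp_pos _)]
  have hu_le (x : ℝ) : deriv u x ≤ -u x := by
    have hmono := monotone_exp_mul_deriv_add hq_loc hu hu'' (fun x => (hu_pos x).le)
      (c := 1) (by simpa using hq)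
    have hlim : Tendsto (fun x => exp (-(1 * x)) * (deriv u x + 1 * u x)) atTop (nhds 0) := by
      simpa using tendsto_exp_neg_atTop_nhds_zero.mul (hu'_top.add hu_top)
    linarith [nonpos_of_mul_nonpos_right (hmono.ge_of_tendsto hlim x) (exp_pos _)]
  refine ⟨hv_le, fun x => ?_, fun x t htx => ?_, fun x t hxt => ?_, fun x => ?_⟩
  · rw [abs_of_neg (hu'_neg x)]
    linarith [hu_le x]
  · simpa using exp_mul_sub_mul_le_of_le_deriv (c := 1) (hv.differentiable one_ne_zero)
      (by simpa using hv_le) htx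
  · simpa [neg_add_eq_sub] using exp_mul_sub_mul_le_of_le_deriv (w := fun y => u (-y)) (c := 1)
      ((hu.differentiable one_ne_zero).comp differentiable_neg)
      (fun y => by rw [deriv_comp_neg]; linarith [hu_le (-y)]) (neg_le_neg hxt)
  · nlinarith [hwronskian x, hv_le x, hu_le x, hu_pos x, hv_pos x]
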